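/- Let y₁, y₂ be words over Σ, # ∉ Σ, y₃ = y₁#y₂. Define the reduced set RMAW^ℓ(y₁) as MAW^ℓ(y₁) minus those words that contain some element of MAW^ℓ(y₂) as a factor, and symmetrically RMAW^ℓ(y₂). If x ∈ MAW^ℓ(y₃) \ (MAW^ℓ(y₁) ∪ MAW^ℓ(y₂)), then x has a prefix in RMAW^ℓ(y_i) and a suffix in RMAW^ℓ(y_j) for some {i,j} = {1,2}. -/
import Mathlib

/-- `x` is a minimal absent word (MAW) of `y`: `x` is not a factor of `y`,
but every proper factor of `x` is a factor of `y`. -/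
def MAW {α : Type*} (y x : List α) : Prop :=
  ¬ x <:+: y ∧ ∀ f : List α, f <:+: x → f ≠ x → f <:+: y

/-- MAW of length at most `ℓ`. -/
def MAWle {α : Type*} (ℓ : ℕ) (y x : List α) : Prop :=
  MAW y x ∧ x.length ≤ ℓ

/-- Reduced set: MAWs of `u` (length ≤ ℓ) containing no MAW of `v` (length ≤ ℓ) as a factor. -/
def RMAW {α : Type*} (ℓ : ℕ) (u v x : List α) : Prop :=
  MAWle ℓ u x ∧ ∀ w : List α, MAWle ℓ v w → ¬ w <:+: x

/-- A proper factor of `x` is a factor of `x.dropLast` or of `x.tail`. -/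
lemma proper_factor_cases {α : Type*} {x f : List α} (hf : f <:+: x) (hne : f ≠ x) :
    f <:+: x.dropLast ∨ f <:+: x.tail := by
  obtain ⟨s, t, h⟩ := hf
  cases t with
  | nil =>
    cases s with
    | nil => simp at h; exact absurd h hne
    | cons a s' =>
      right
      have : x.tail = s' ++ f := by rw [← h]; simp
      exact ⟨s', [], by simp [this]⟩
  | cons b t' =>
    left
    refine ⟨s, (b :: t').dropLast, ?_⟩
    rw [← h, List.dropLast_append_cons]

lemma maw_reverse_of {α : Type*} {y x : List α} (h : MAW y x) : MAW y.reverse x.reverse := by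
  constructor
  · rw [List.reverse_infix]; exact h.1
  · intro f hf hne
    have h1 : f.reverse <:+: x := by
      rw [← List.reverse_infix, List.reverse_reverse]; exact hf
    have h2 : f.reverse ≠ x := by
      intro he; apply hne; rw [← he, List.reverse_reverse]
    have := h.2 f.reverse h1 h2
    rw [← List.reverse_infix, List.reverse_reverse] at this
    exact this

lemma mawle_reverse_of {α : Type*} {ℓ : ℕ} {y x : List α} (h : MAWle ℓ y x) :
    MAWle ℓ y.reverse x.reverse :=
  ⟨maw_reverse_of h.1, by simpa using h.2⟩

lemma rmaw_reverse_of {α : Type*} {ℓ : ℕ} {u v x : List α} (h : RMAW ℓ u v x) :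
    RMAW ℓ u.reverse v.reverse x.reverse := by
  refine ⟨mawle_reverse_of h.1, ?_⟩
  intro w hw hwin
  have hw' : MAWle ℓ v w.reverse := by
    have := mawle_reverse_of hw; simpa using this
  apply h.2 w.reverse hw'
  rw [← List.reverse_infix, List.reverse_reverse]; exact hwin

/-- A hash-free factor of `y₁ ++ hash :: y₂` is a factor of `y₁` or of `y₂`. -/
lemma infix_split {α : Type*} {y₁ y₂ u : List α} {hash : α}
    (h : u <:+: y₁ ++ hash :: y₂) (hu : hash ∉ u) : u <:+: y₁ ∨ u <:+: y₂ := by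
  obtain ⟨s, t, h⟩ := h
  by_cases hs : s.length ≤ y₁.length
  · by_cases hsu : s.length + u.length ≤ y₁.length
    · left
      have hd : u ++ t = y₁.drop s.length ++ (hash :: y₂) := by
        have := congrArg (List.drop s.length) h
        rwa [List.drop_append_of_le_length hs, List.append_assoc,
          List.drop_left' rfl] at this
      have hp1 : u <+: u ++ t := ⟨t, rfl⟩
      have hp2 : y₁.drop s.length <+: u ++ t := ⟨hash :: y₂, hd.symm⟩
      have hlen : u.length ≤ (y₁.drop s.length).length := by
        simp [List.length_drop]; omega
      have := List.prefix_of_prefix_length_le hp1 hp2 hlen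
      exact this.isInfix.trans (List.drop_suffix _ _).isInfix
    · -- s.length ≤ y₁.length < s.length + u.length : hash ∈ u, contradiction
      exfalso
      have hd : u ++ t = y₁.drop s.length ++ (hash :: y₂) := by
        have := congrArg (List.drop s.length) h
        rwa [List.drop_append_of_le_length hs, List.append_assoc,
          List.drop_left' rfl] at this
      have hp1 : y₁.drop s.length <+: u ++ t := ⟨hash :: y₂, hd.symm⟩
      have hp2 : u <+: u ++ t := ⟨t, rfl⟩
      have hlen : (y₁.drop s.length).length ≤ u.length := by
        simp [List.length_drop]; omega
      obtain ⟨r, hr⟩ := List.prefix_of_prefix_length_le hp1 hp2 hlen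
      have hrne : r ≠ [] := by
        intro he
        subst he
        apply absurd (congrArg List.length hr)
        simp [List.length_drop]; omega
      have : r <+: hash :: y₂ := by
        have : y₁.drop s.length ++ (r ++ t) = y₁.drop s.length ++ (hash :: y₂) := by
          rw [← List.append_assoc, hr]; exact hd
        have := List.append_cancel_left this
        exact ⟨t, this⟩
      obtain ⟨r', hr'⟩ := this
      cases r with
      | nil => exact hrne rfl
      | cons a r'' =>
        simp at hr'
        apply hu
        rw [← hr]
        exact List.mem_append_right _ (by simp [hr'.1])
  · right
    push_neg at hs
    have hs' : y₁.length + 1 ≤ s.length := hs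
    have := congrArg (List.drop (y₁.length + 1)) h
    rw [List.append_assoc, List.drop_append_of_le_length hs'] at this
    have hrhs : (y₁ ++ hash :: y₂).drop (y₁.length + 1) = y₂ := by
      rw [List.drop_append]
      simp
    rw [hrhs] at this
    exact ⟨s.drop (y₁.length + 1), t, by rw [List.append_assoc]; exact this⟩

open Classical in
/-- Key lemma: if `x` is absent from `u`, every factor of `x.tail` occurs in `u`,
`x.dropLast` occurs in `v`, `x` is short, and `x` itself is not a MAWle of `u`,
then some prefix of `x` is in `RMAW ℓ u v`. -/
lemma key_prefix {α : Type*} {ℓ : ℕ} {u v x : List α}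
    (hlen : x.length ≤ ℓ)
    (habs : ¬ x <:+: u)
    (htail : x.tail <:+: u)
    (hdrop : x.dropLast <:+: v)
    (hne : ¬ MAWle ℓ u x) :
    ∃ p : List α, p <+: x ∧ RMAW ℓ u v p := by
  have hxne : x ≠ [] := by rintro rfl; exact habs List.nil_infix
  have hex : ∃ n, ¬ x.take n <:+: u := ⟨x.length, by simpa using habs⟩
  obtain ⟨n, hqabs, hmin⟩ : ∃ n, (¬ x.take n <:+: u) ∧ ∀ m, m < n → x.take m <:+: u :=
    ⟨Nat.find hex, Nat.find_spec hex, fun m hm => not_not.mp (Nat.find_min hex hm)⟩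
  have hnle : n ≤ x.length := by
    by_contra hc
    push_neg at hc
    exact habs (by simpa using hmin x.length hc)
  have hn1 : 1 ≤ n := by
    rcases Nat.eq_zero_or_pos n with h0 | h0
    · exfalso; apply hqabs; rw [h0]; simp
    · exact h0
  set q := x.take n with hq
  have hqlen : q.length = n := by simp [hq]; omega
  have hqpre : q <+: x := List.take_prefix _ _
  -- q is a MAW of u
  have hmaw : MAW u q := by
    refine ⟨hqabs, fun f hf hfne => ?_⟩
    rcases proper_factor_cases hf hfne with hfd | hft
    · -- f <:+: q.dropLast = x.take (n-1)
      have hqd : q.dropLast = x.take (n - 1) := by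
        rw [List.dropLast_eq_take, hqlen, hq, List.take_take]
        congr 1; omega
      rw [hqd] at hfd
      exact hfd.trans (hmin (n - 1) (by omega))
    · -- f <:+: q.tail which is a prefix of x.tail
      have hqt : q.tail <+: x.tail := by
        obtain ⟨r, hr⟩ := hqpre
        have hqne : q ≠ [] := by
          intro he; rw [he] at hqlen; simp at hqlen; omega
        refine ⟨r, ?_⟩
        rw [← hr, List.tail_append_of_ne_nil hqne]
      exact hft.trans (hqt.isInfix.trans htail)
  have hqx : q ≠ x := by
    intro he
    exact hne ⟨by rwa [← he], by rw [← he]; omega⟩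
  have hnlt : n < x.length := by
    rcases lt_or_eq_of_le hnle with h | h
    · exact h
    · exfalso; apply hqx; rw [hq, h, List.take_length]
  -- q is a factor of x.dropLast, hence every factor of q occurs in v
  have hqdrop : q <:+: v := by
    have : q <+: x.dropLast := by
      have : x.dropLast.take n = q := by
        rw [List.dropLast_eq_take, List.take_take, hq]
        congr 1; omega
      rw [← this]; exact List.take_prefix _ _
    exact this.isInfix.trans hdrop
  refine ⟨q, hqpre, ⟨hmaw, by rw [hqlen]; omega⟩, ?_⟩
  intro w hw hwq
  exact hw.1.1 (hwq.trans hqdrop)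

theorem case2_prefix_suffix_reduced {α : Type*} (S : Set α) (hash : α)
    (hhash : hash ∉ S) (y₁ y₂ : List α)
    (hy₁ : ∀ a ∈ y₁, a ∈ S) (hy₂ : ∀ a ∈ y₂, a ∈ S)
    (ℓ : ℕ) (x : List α) (hxS : ∀ a ∈ x, a ∈ S)
    (hx : MAWle ℓ (y₁ ++ hash :: y₂) x)
    (h₁ : ¬ MAWle ℓ y₁ x) (h₂ : ¬ MAWle ℓ y₂ x) :
    ((∃ p : List α, p <+: x ∧ RMAW ℓ y₁ y₂ p) ∧
      (∃ s : List α, s <:+ x ∧ RMAW ℓ y₂ y₁ s)) ∨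
    ((∃ p : List α, p <+: x ∧ RMAW ℓ y₂ y₁ p) ∧
      (∃ s : List α, s <:+ x ∧ RMAW ℓ y₁ y₂ s)) := by
  obtain ⟨⟨habs3, hmin3⟩, hlen⟩ := hx
  have hhx : hash ∉ x := fun h => hhash (hxS _ h)
  have hxne : x ≠ [] := by rintro rfl; exact habs3 List.nil_infix
  have habs1 : ¬ x <:+: y₁ := fun h => habs3 (h.trans ⟨[], hash :: y₂, by simp⟩)
  have habs2 : ¬ x <:+: y₂ := fun h => habs3 (h.trans ⟨y₁ ++ [hash], [], by simp⟩)
  -- dropLast x and tail x occur in y₁ or y₂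
  have hdl : x.dropLast <:+: y₁ ∨ x.dropLast <:+: y₂ := by
    apply infix_split (y₁ := y₁) (y₂ := y₂) (hash := hash)
    · exact hmin3 _ (List.dropLast_prefix x).isInfix
        (fun h => by
          have := congrArg List.length h
          rw [List.length_dropLast] at this
          have : x.length = 0 := by omega
          exact hxne (List.length_eq_zero_iff.mp this))
    · exact fun h => hhx ((List.dropLast_prefix x).sublist.mem h)
  have htl : x.tail <:+: y₁ ∨ x.tail <:+: y₂ := by
    apply infix_split (y₁ := y₁) (y₂ := y₂) (hash := hash)
    · exact hmin3 _ (List.tail_suffix x).isInfix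
        (fun h => by
          have := congrArg List.length h
          rw [List.length_tail] at this
          have : x.length = 0 := by omega
          exact hxne (List.length_eq_zero_iff.mp this))
    · exact fun h => hhx ((List.tail_suffix x).sublist.mem h)
  -- helper to rule out both-in-one-word cases
  have hboth : ∀ y : List α, ¬ x <:+: y → x.dropLast <:+: y → x.tail <:+: y → MAWle ℓ y x := by
    intro y hy hd ht
    refine ⟨⟨hy, fun f hf hfne => ?_⟩, hlen⟩
    rcases proper_factor_cases hf hfne with h | h
    · exact h.trans hd
    · exact h.trans ht
  rcases hdl with hdl | hdl <;> rcases htl with htl | htl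
  · exact absurd (hboth y₁ habs1 hdl htl) h₁
  · -- dropLast in y₁, tail in y₂ : second disjunct
    right
    constructor
    · exact key_prefix hlen habs2 htl hdl h₂
    · -- suffix in RMAW ℓ y₁ y₂ via reversal
      obtain ⟨p, hp, hrp⟩ := key_prefix (x := x.reverse) (u := y₁.reverse) (v := y₂.reverse)
        (by simpa using hlen)
        (by rw [← List.reverse_infix] at habs1; simpa using habs1)
        (by rw [List.tail_reverse, List.reverse_infix]; exact hdl)
        (by rw [List.dropLast_reverse, List.reverse_infix]; exact htl)
        (fun h => h₁ (by have := mawle_reverse_of h; simpa using this))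
      refine ⟨p.reverse, ?_, ?_⟩
      · rw [← List.reverse_suffix] at *; simpa using hp
      · have := rmaw_reverse_of hrp; simpa using this
  · -- dropLast in y₂, tail in y₁ : first disjunct
    left
    constructor
    · exact key_prefix hlen habs1 htl hdl h₁
    · obtain ⟨p, hp, hrp⟩ := key_prefix (x := x.reverse) (u := y₂.reverse) (v := y₁.reverse)
        (by simpa using hlen)
        (by rw [← List.reverse_infix] at habs2; simpa using habs2)
        (by rw [List.tail_reverse, List.reverse_infix]; exact hdl)
        (by rw [List.dropLast_reverse, List.reverse_infix]; exact htl)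
        (fun h => h₂ (by have := mawle_reverse_of h; simpa using this))
      refine ⟨p.reverse, ?_, ?_⟩
      · rw [← List.reverse_suffix] at *; simpa using hp
      · have := rmaw_reverse_of hrp; simpa using this
  · exact absurd (hboth y₂ habs2 hdl htl) h₂
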